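/- arXiv:1711.08494 — 2 statements merged into one kernel-verified Lean document; each statement's English description precedes it below -/
import Mathlib

section
/- For every n×n matrix a with entries in {−1,+1} there exist vectors x, y ∈ {−1,+1}ⁿ such that Σᵢⱼ aᵢⱼ xᵢ yⱼ ≥ n^{3/2}/√3. -/
open Finset

/-!
Fix a sign vector `y` and put `Rᵢ(y) = Σⱼ aᵢⱼ yⱼ`; choosing `xᵢ = sign Rᵢ(y)` makes the bilinear
form equal to `Σᵢ |Rᵢ(y)|`, so it suffices to find `y` with `Σᵢ |Rᵢ(y)| ≥ n √(n/3)`, and by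
averaging it suffices that each row has `E |Rᵢ| ≥ √(n/3)` for uniform random `y`.
That is the `L¹` Khintchine inequality with constant `1/√3`: Hölder's inequality gives
`(E R²)³ ≤ (E |R|)² E R⁴`, and for a Rademacher sum `R = Σⱼ cⱼ yⱼ` one computes
`E R² = Σ cⱼ²` and `E R⁴ = 3 (Σ cⱼ²)² - 2 Σ cⱼ⁴ ≤ 3 (E R²)²`.
-/

theorem sum_sq_pow_three_le_sq_sum_abs_mul_sum_pow_four {ι : Type*} (s : Finset ι) (f : ι → ℝ) :
    (∑ i ∈ s, f i ^ 2) ^ 3 ≤ (∑ i ∈ s, |f i|) ^ 2 * ∑ i ∈ s, f i ^ 4 := by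
  set A := ∑ i ∈ s, f i ^ 2
  set L := ∑ i ∈ s, |f i|
  set M := ∑ i ∈ s, f i ^ 4
  set C := ∑ i ∈ s, |f i| ^ 3
  have hAC : A ^ 2 ≤ L * C := sum_sq_le_sum_mul_sum_of_sq_le_mul s
    (fun i _ => abs_nonneg _) (fun i _ => by positivity)
    (fun i _ => le_of_eq (by rw [← sq_abs (f i)]; ring))
  have hCM : C ^ 2 ≤ A * M := sum_sq_le_sum_mul_sum_of_sq_le_mul s
    (fun i _ => sq_nonneg _) (fun i _ => by positivity)
    (fun i _ => le_of_eq (by rw [show (|f i| ^ 3) ^ 2 = (|f i| ^ 2) ^ 3 by ring, sq_abs]; ring))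
  have hA0 : 0 ≤ A := sum_nonneg fun i _ => sq_nonneg (f i)
  rcases hA0.eq_or_lt with hA | hA
  · rw [← hA, zero_pow three_ne_zero]
    exact mul_nonneg (sq_nonneg L) (sum_nonneg fun i _ => by positivity)
  refine le_of_mul_le_mul_left ?_ hA
  calc A * A ^ 3 = (A ^ 2) ^ 2 := by ring
    _ ≤ (L * C) ^ 2 := pow_le_pow_left₀ (sq_nonneg A) hAC 2
    _ = L ^ 2 * C ^ 2 := by ring
    _ ≤ L ^ 2 * (A * M) := by gcongr
    _ = A * (L ^ 2 * M) := by ring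

def boolSign (b : Bool) : ℝ := if b then 1 else -1

theorem boolSign_eq_one_or_eq_neg_one (b : Bool) : boolSign b = 1 ∨ boolSign b = -1 := by
  cases b <;> simp [boolSign]

section SignedSum

variable {n : ℕ}

/-- The Rademacher sum `Σⱼ cⱼ yⱼ` at `y = boolSign ∘ s`; a sum over all `s` is `2ⁿ` times an
expectation over uniform random signs. -/
def signedSum (c : Fin n → ℝ) (s : Fin n → Bool) : ℝ := ∑ j, c j * boolSign (s j)

theorem signedSum_cons (c : Fin (n + 1) → ℝ) (b : Bool) (s : Fin n → Bool) :
    signedSum c (Fin.cons b s) = signedSum (Fin.tail c) s + c 0 * boolSign b := by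
  simp only [signedSum, Fin.sum_univ_succ, Fin.cons_zero, Fin.cons_succ, Fin.tail]
  ring

theorem sum_signedSum_succ (F : ℝ → ℝ) (c : Fin (n + 1) → ℝ) :
    ∑ s, F (signedSum c s) =
      ∑ s, (F (signedSum (Fin.tail c) s + c 0) + F (signedSum (Fin.tail c) s - c 0)) := by
  rw [← (Fin.consEquiv fun _ => Bool).sum_comp, Fintype.sum_prod_type, Fintype.sum_bool,
    ← sum_add_distrib]
  simp [Fin.consEquiv, signedSum_cons, boolSign, sub_eq_add_neg]

theorem sum_signedSum_sq (c : Fin n → ℝ) :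
    ∑ s, signedSum c s ^ 2 = 2 ^ n * ∑ j, c j ^ 2 := by
  induction n with
  | zero => simp [signedSum]
  | succ n ih =>
    have hpar (R a : ℝ) : (R + a) ^ 2 + (R - a) ^ 2 = 2 * R ^ 2 + 2 * a ^ 2 := by ring
    rw [sum_signedSum_succ (· ^ 2)]
    simp only [hpar, sum_add_distrib, ← mul_sum, ih, sum_const, card_univ,
      Fintype.card_fun, Fintype.card_bool, Fintype.card_fin, nsmul_eq_mul, Fin.sum_univ_succ]
    push_cast
    simp only [Fin.tail]
    ring

theorem sum_signedSum_pow_four (c : Fin n → ℝ) :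
    ∑ s, signedSum c s ^ 4 = 2 ^ n * (3 * (∑ j, c j ^ 2) ^ 2 - 2 * ∑ j, c j ^ 4) := by
  induction n with
  | zero => simp [signedSum]
  | succ n ih =>
    have hpar (R a : ℝ) :
        (R + a) ^ 4 + (R - a) ^ 4 = 2 * R ^ 4 + 12 * a ^ 2 * R ^ 2 + 2 * a ^ 4 := by ring
    rw [sum_signedSum_succ (· ^ 4)]
    simp only [hpar, sum_add_distrib, ← mul_sum, ih, sum_signedSum_sq,
      sum_const, card_univ, Fintype.card_fun, Fintype.card_bool, Fintype.card_fin, nsmul_eq_mul,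
      Fin.sum_univ_succ]
    push_cast
    simp only [Fin.tail]
    ring

theorem two_pow_mul_sqrt_le_sum_abs_signedSum (c : Fin n → ℝ) :
    2 ^ n * √((∑ j, c j ^ 2) / 3) ≤ ∑ s, |signedSum c s| := by
  set S := ∑ j, c j ^ 2
  set L := ∑ s, |signedSum c s|
  have hS : 0 ≤ S := sum_nonneg fun j _ => sq_nonneg (c j)
  have hL : 0 ≤ L := sum_nonneg fun s _ => abs_nonneg _
  have hpow : (0 : ℝ) < 2 ^ n := by positivity
  have hHolder : (2 ^ n * S) ^ 3 ≤ L ^ 2 * (2 ^ n * (3 * S ^ 2 - 2 * ∑ j, c j ^ 4)) := by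
    simpa only [sum_signedSum_sq, sum_signedSum_pow_four] using
      sum_sq_pow_three_le_sq_sum_abs_mul_sum_pow_four univ (signedSum c)
  have hS4 : 0 ≤ ∑ j, c j ^ 4 := sum_nonneg fun j _ => by positivity
  have key : (2 ^ n * S) ^ 3 ≤ (2 ^ n * S ^ 2) * (3 * L ^ 2) := by
    refine hHolder.trans ?_
    nlinarith [mul_nonneg (mul_nonneg (sq_nonneg L) hpow.le) hS4]
  rw [← Real.sqrt_sq hpow.le, ← Real.sqrt_mul (sq_nonneg _), Real.sqrt_le_iff]
  refine ⟨hL, ?_⟩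
  rcases hS.eq_or_lt with h0 | hpos
  · rw [← h0]; simp [sq_nonneg]
  have : 0 < 2 ^ n * S ^ 2 := by positivity
  nlinarith

theorem exists_sum_sqrt_le_sum_abs_signedSum {ι : Type*} [Fintype ι] (a : ι → Fin n → ℝ) :
    ∃ s, ∑ i, √((∑ j, a i j ^ 2) / 3) ≤ ∑ i, |signedSum (a i) s| := by
  obtain ⟨s, -, hs⟩ := exists_le_of_sum_le (univ_nonempty (α := Fin n → Bool))
    (f := fun _ => ∑ i, √((∑ j, a i j ^ 2) / 3)) (g := fun s => ∑ i, |signedSum (a i) s|) <| by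
      rw [sum_const, card_univ, Fintype.card_fun, Fintype.card_bool, Fintype.card_fin,
        nsmul_eq_mul, sum_comm, mul_sum]
      push_cast
      exact sum_le_sum fun i _ => two_pow_mul_sqrt_le_sum_abs_signedSum (a i)
  exact ⟨s, hs⟩

end SignedSum

theorem exists_sign_vector_sum_mul_eq_sum_abs {ι κ : Type*} [Fintype ι] [Fintype κ]
    (a : ι → κ → ℝ) (y : κ → ℝ) :
    ∃ x : ι → ℝ, (∀ i, x i = 1 ∨ x i = -1) ∧
      ∑ i, ∑ j, a i j * x i * y j = ∑ i, |∑ j, a i j * y j| := by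
  refine ⟨fun i => if 0 ≤ ∑ j, a i j * y j then 1 else -1,
    fun i => by dsimp only; split_ifs <;> simp, ?_⟩
  refine sum_congr rfl fun i _ => ?_
  rw [show ∀ x : ℝ, ∑ j, a i j * x * y j = (∑ j, a i j * y j) * x from fun x => by
    rw [sum_mul]; exact sum_congr rfl fun j _ => by ring]
  dsimp only
  split_ifs with h
  · rw [mul_one, abs_of_nonneg h]
  · rw [mul_neg_one, abs_of_neg (not_le.mp h)]

/-- Gale–Berlekamp switching game: for every `n × n` matrix with `±1` entries there
exist `x, y ∈ {−1,+1}ⁿ` with `Σᵢⱼ aᵢⱼ xᵢ yⱼ ≥ n^{3/2}/√3`. -/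
theorem gale_berlekamp_exists (n : ℕ) (a : Fin n → Fin n → ℝ)
    (ha : ∀ i j, a i j = 1 ∨ a i j = -1) :
    ∃ x y : Fin n → ℝ, (∀ i, x i = 1 ∨ x i = -1) ∧ (∀ j, y j = 1 ∨ y j = -1) ∧
      (n : ℝ) ^ ((3 : ℝ) / 2) / Real.sqrt 3 ≤ ∑ i, ∑ j, a i j * x i * y j := by
  have hrow (i : Fin n) : ∑ j, a i j ^ 2 = n := by
    have hsq (j : Fin n) : a i j ^ 2 = 1 := by rcases ha i j with h | h <;> simp [h]
    simp [hsq]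
  obtain ⟨s, hs⟩ := exists_sum_sqrt_le_sum_abs_signedSum a
  obtain ⟨x, hx, hsum⟩ := exists_sign_vector_sum_mul_eq_sum_abs a fun j => boolSign (s j)
  refine ⟨x, fun j => boolSign (s j), hx, fun j => boolSign_eq_one_or_eq_neg_one (s j), ?_⟩
  have hbound : (n : ℝ) ^ ((3 : ℝ) / 2) / √3 = ∑ i, √((∑ j, a i j ^ 2) / 3) := by
    rw [show (3 : ℝ) / 2 = 1 + 1 / 2 by norm_num,
      Real.rpow_one_add' (Nat.cast_nonneg n) (by norm_num), ← Real.sqrt_eq_rpow]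
    simp [hrow, mul_div_assoc]
  rw [hbound, hsum]
  exact hs
end

section
/- Let G = (V,E) be a finite simple graph with a linear order on V such that u < v implies deg(u) ≤ deg(v). For a marking vector X ∈ {0,1}^V, let I be the set of vertices w with X(w) = 1 and X(u) = 0 for all neighbors u of w with u > w. Then I is an independent set in G, and for every w ∈ V, [w ∈ I] ≥ X(w) − Σ_{(w,u)∈E, w<u} X(w)X(u). -/
open Finset

namespace SimpleGraph

variable {V R : Type*} [LinearOrder V] (G : SimpleGraph V)

def lubySurvivors [Zero R] [One R] (X : V → R) : Set V :=
  {w | X w = 1 ∧ ∀ u, G.Adj w u → w < u → X u = 0}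

theorem isIndepSet_lubySurvivors [Zero R] [One R] [NeZero (1 : R)] (X : V → R) :
    G.IsIndepSet (G.lubySurvivors X) := by
  intro v ⟨hv, hv_up⟩ u ⟨hu, hu_up⟩ _ hadj
  rcases lt_or_gt_of_ne (G.ne_of_adj hadj) with hlt | hlt
  · exact one_ne_zero (hu.symm.trans (hv_up u hadj hlt))
  · exact one_ne_zero (hv.symm.trans (hu_up v hadj.symm hlt))

theorem exists_adj_lt_ne_zero_of_notMem_lubySurvivors [Zero R] [One R] {X : V → R} {w : V}
    (hw : X w = 1) (hS : w ∉ G.lubySurvivors X) : ∃ u, G.Adj w u ∧ w < u ∧ X u ≠ 0 := by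
  by_contra! h
  exact hS ⟨hw, h⟩

/-- A marked vertex that gets unmarked has a marked higher neighbour, which alone contributes
`1` to the sum. -/
theorem sub_sum_le_ite_mem_lubySurvivors [Ring R] [PartialOrder R] [IsOrderedRing R]
    [G.LocallyFinite] {X : V → R} (hX : ∀ v, X v = 0 ∨ X v = 1) (w : V)
    [Decidable (w ∈ G.lubySurvivors X)] :
    X w - ∑ u ∈ (G.neighborFinset w).filter (w < ·), X w * X u
      ≤ if w ∈ G.lubySurvivors X then 1 else 0 := by
  have hX_nonneg (v : V) : 0 ≤ X v := by rcases hX v with h | h <;> simp [h]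
  have hsum_nonneg : 0 ≤ ∑ u ∈ (G.neighborFinset w).filter (w < ·), X w * X u :=
    sum_nonneg fun u _ => mul_nonneg (hX_nonneg w) (hX_nonneg u)
  by_cases hS : w ∈ G.lubySurvivors X
  · rw [if_pos hS]
    exact (sub_le_self _ hsum_nonneg).trans_eq hS.1
  rw [if_neg hS]
  rcases hX w with h0 | h1
  · simp [h0]
  obtain ⟨u, hadj, hlt, hu⟩ := G.exists_adj_lt_ne_zero_of_notMem_lubySurvivors h1 hS
  have hmem : u ∈ (G.neighborFinset w).filter (w < ·) := by simp [hadj, hlt]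
  have hu_le : X w * X u ≤ ∑ u ∈ (G.neighborFinset w).filter (w < ·), X w * X u :=
    single_le_sum (fun v _ => mul_nonneg (hX_nonneg w) (hX_nonneg v)) hmem
  rw [h1, (hX u).resolve_left hu, one_mul] at hu_le
  rw [h1]
  exact sub_nonpos.mpr hu_le

end SimpleGraph

theorem find_is_estimator_general (V : Type*) [Fintype V] [LinearOrder V]
    (G : SimpleGraph V) [DecidableRel G.Adj]
    (X : V → ℝ) (hX : ∀ v, X v = 0 ∨ X v = 1) :
    let I : Set V := {w | X w = 1 ∧ ∀ u, G.Adj w u → w < u → X u = 0}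
    (∀ v ∈ I, ∀ u ∈ I, ¬ G.Adj v u) ∧
    (∀ w : V,
      X w - ∑ u ∈ (G.neighborFinset w).filter (fun u => w < u), X w * X u
        ≤ (if w ∈ I then (1 : ℝ) else 0)) := by
  refine ⟨fun _ hv _ hu hadj => G.isIndepSet_lubySurvivors X hv hu (G.ne_of_adj hadj) hadj,
    fun w => ?_⟩
  classical
  -- the two sides differ only in their `Decidable` and `LE` instances
  convert G.sub_sum_le_ite_mem_lubySurvivors hX w using 2 <;> rfl

/-- Luby's FIND-IS unmarking step: given a marking `X ∈ {0,1}^V` and vertex ordering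
compatible with degrees, the set `I` of marked vertices with no higher-ordered marked
neighbor is independent, and `[w ∈ I] ≥ X(w) − Σ_{(w,u)∈E, w<u} X(w)X(u)`. -/
theorem find_is_estimator (V : Type*) [Fintype V] [LinearOrder V]
    (G : SimpleGraph V) [DecidableRel G.Adj]
    (hdeg : ∀ u v : V, u < v → G.degree u ≤ G.degree v)
    (X : V → ℝ) (hX : ∀ v, X v = 0 ∨ X v = 1) :
    let I : Set V := {w | X w = 1 ∧ ∀ u, G.Adj w u → w < u → X u = 0}
    (∀ v ∈ I, ∀ u ∈ I, ¬ G.Adj v u) ∧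
    (∀ w : V,
      X w - ∑ u ∈ (G.neighborFinset w).filter (fun u => w < u), X w * X u
        ≤ (if w ∈ I then (1 : ℝ) else 0)) :=
  find_is_estimator_general V G X hX
end
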